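/- Let N ≥ C₂ log n genes be sampled. Fix a quartet X of four taxa; each gene independently contains X with probability p⁴ (0 < p ≤ 1), and conditionally on containing X displays the true quartet q_s with probability at least 2/3. Then for C₂ sufficiently large (depending only on p), the probability that the empirical plurality quartet over genes containing X differs from q_s is at most O(n^{-4}); consequently, by a union bound over all (n choose 4) four-tuples, with probability 1 - O(1) → 1 every plurality quartet is correct. -/

import Mathlib

open MeasureTheory ProbabilityTheory Finset

/-- Discrete σ-algebra on quartet outcomes. -/
instance : MeasurableSpace (Option (Fin 3)) := ⊤

/-!
Fix a competing topology `q ≠ q_s`. The score `𝟙[gene displays q] - 𝟙[gene displays q_s]`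
lies in `[-1, 1]`, and since `q_s` takes at least two thirds of the mass `p⁴` of the genes
containing `X`, its mean is at most `-p⁴/3`. The plurality can only fail against `q` if the
sum of the `N` independent scores is nonnegative, which by Hoeffding's inequality has
probability at most `exp (-N p⁸ / 18) ≤ n⁻⁴` once `N ≥ (72 / p⁸) log n`. A union bound over
the two competitors finishes the proof.
-/

theorem Real.exp_neg_le_inv_pow_of_mul_log_le {n x : ℝ} (hn : 0 < n) (k : ℕ)
    (h : k * Real.log n ≤ x) : Real.exp (-x) ≤ (n ^ k)⁻¹ := by
  calc Real.exp (-x) ≤ Real.exp (-(k * Real.log n)) := Real.exp_le_exp.2 (neg_le_neg h)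
    _ = (n ^ k)⁻¹ := by rw [Real.exp_neg, ← Real.log_pow, Real.exp_log (pow_pos hn k)]

theorem measureReal_sub_le_of_two_thirds_le {Ω : Type*} [MeasurableSpace Ω] {μ : Measure Ω}
    [IsFiniteMeasure μ] {A B S : Set Ω} (hB : MeasurableSet B) (hAB : Disjoint A B)
    (hAS : A ⊆ S) (hBS : B ⊆ S) (hA : 2 / 3 * μ.real S ≤ μ.real A) :
    μ.real B - μ.real A ≤ -(μ.real S / 3) := by
  have hunion : μ.real A + μ.real B ≤ μ.real S := by
    rw [← measureReal_union hAB hB]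
    exact measureReal_mono (Set.union_subset hAS hBS)
  linarith

section Hoeffding

variable {Ω ι : Type*} [MeasurableSpace Ω] {μ : Measure Ω} [IsProbabilityMeasure μ] [Fintype ι]

theorem measureReal_sum_nonneg_le_exp {Y : ι → Ω → ℝ} (hind : iIndepFun Y μ)
    (hmeas : ∀ i, Measurable (Y i)) (hbdd : ∀ i ω, Y i ω ∈ Set.Icc (-1) 1) {m : ℝ}
    (hm : 0 ≤ m) (hmean : ∀ i, μ[Y i] ≤ -m) :
    μ.real {ω | 0 ≤ ∑ i, Y i ω} ≤ Real.exp (-(Fintype.card ι * m ^ 2 / 2)) := by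
  have hsubG : ∀ i ∈ (univ : Finset ι), HasSubgaussianMGF (fun ω ↦ Y i ω - μ[Y i]) 1 μ := by
    intro i _
    have hrange : (‖(1 : ℝ) - -1‖₊ / 2) ^ 2 = 1 := by
      rw [← NNReal.coe_inj]
      norm_num
    simpa only [hrange] using
      hasSubgaussianMGF_of_mem_Icc (hmeas i).aemeasurable (ae_of_all _ (hbdd i))
  have hindc : iIndepFun (fun i ω ↦ Y i ω - μ[Y i]) μ := by
    have := hind.comp (fun (i : ι) (x : ℝ) ↦ x - μ[Y i]) fun _ ↦ measurable_id.sub_const _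
    exact this
  have hε : 0 ≤ Fintype.card ι * m := by positivity
  have hsub : {ω | 0 ≤ ∑ i, Y i ω} ⊆
      {ω | Fintype.card ι * m ≤ ∑ i, (Y i ω - μ[Y i])} := by
    intro ω hω
    have : ∑ i, μ[Y i] ≤ ∑ _i : ι, -m := sum_le_sum fun i _ ↦ hmean i
    simp only [Set.mem_ofPred_eq, sum_sub_distrib, sum_const, card_univ, nsmul_eq_mul] at hω this ⊢
    linarith
  calc μ.real {ω | 0 ≤ ∑ i, Y i ω}
      ≤ μ.real {ω | Fintype.card ι * m ≤ ∑ i, (Y i ω - μ[Y i])} := measureReal_mono hsub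
    _ ≤ Real.exp (-(Fintype.card ι * m) ^ 2 / (2 * ((∑ _i : ι, 1 : NNReal) : ℝ))) :=
        HasSubgaussianMGF.measure_sum_ge_le_of_iIndepFun hindc hsubG hε
    _ = Real.exp (-(Fintype.card ι * m ^ 2 / 2)) := by
        rcases eq_or_ne (Fintype.card ι : ℝ) 0 with h | h
        · simp [h]
        · simp only [sum_const, card_univ, nsmul_eq_mul, mul_one, NNReal.coe_natCast]
          congr 1
          field_simp

end Hoeffding

section Counts

variable {Ω ι β : Type*} [MeasurableSpace Ω] {μ : Measure Ω} [MeasurableSpace β]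
  [MeasurableSingletonClass β] [DecidableEq β]

theorem integral_ite_eq_one_eq_measureReal {g : Ω → β} (hg : Measurable g) (c : β) :
    μ[fun ω ↦ if g ω = c then (1 : ℝ) else 0] = μ.real {ω | g ω = c} := by
  have hc : MeasurableSet {ω | g ω = c} := hg measurableSet_eq
  rw [← integral_indicator_one hc]
  congr 1 with ω
  simp [Set.indicator_apply]

variable [IsProbabilityMeasure μ] [Fintype ι]

theorem measureReal_card_le_card_le_exp {G : ι → Ω → β} (hG : ∀ i, Measurable (G i))
    (hind : iIndepFun G μ) {a b : β} {m : ℝ} (hm : 0 ≤ m)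
    (hmargin : ∀ i, μ.real {ω | G i ω = b} - μ.real {ω | G i ω = a} ≤ -m) :
    μ.real {ω | #{i | G i ω = a} ≤ #{i | G i ω = b}} ≤
      Real.exp (-(Fintype.card ι * m ^ 2 / 2)) := by
  set hit : β → β → ℝ := fun c v ↦ if v = c then 1 else 0
  have hhit : ∀ c, Measurable (hit c) := fun c ↦
    measurable_const.ite measurableSet_eq measurable_const
  set score : β → ℝ := fun v ↦ hit b v - hit a v
  have hscore : Measurable score := (hhit b).sub (hhit a)
  have hevent : {ω | #{i | G i ω = a} ≤ #{i | G i ω = b}} =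
      {ω | 0 ≤ ∑ i, (score ∘ G i) ω} := by
    ext ω
    simp only [Set.mem_ofPred_eq, Function.comp_apply, score, hit, sum_sub_distrib, sum_boole,
      sub_nonneg, Nat.cast_le]
  rw [hevent]
  refine measureReal_sum_nonneg_le_exp (hind.comp (fun _ ↦ score) fun _ ↦ hscore)
    (fun i ↦ hscore.comp (hG i)) (fun i ω ↦ ?_) hm fun i ↦ ?_
  · simp only [Function.comp_apply, score, hit]
    constructor <;> split_ifs <;> norm_num
  · have hint : ∀ c, Integrable (hit c ∘ G i) μ := fun c ↦
      .of_mem_Icc 0 1 ((hhit c).comp (hG i)).aemeasurable <| ae_of_all _ fun ω ↦ by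
        simp only [Function.comp_apply, hit]
        split_ifs <;> norm_num
    calc μ[score ∘ G i] = μ[hit b ∘ G i] - μ[hit a ∘ G i] := integral_sub (hint b) (hint a)
      _ = μ.real {ω | G i ω = b} - μ.real {ω | G i ω = a} := by
        simp only [Function.comp_def, hit, integral_ite_eq_one_eq_measureReal (hG i)]
      _ ≤ -m := hmargin i

end Counts

theorem plurality_quartet_error_general (p : ℝ) (hp0 : 0 < p) :
    ∃ C₂ c : ℝ, 0 < C₂ ∧ 0 < c ∧
      ∀ (n N : ℕ), 2 ≤ n → C₂ * Real.log n ≤ (N : ℝ) →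
      ∀ (Ω : Type) [MeasurableSpace Ω] (μ : Measure Ω) [IsProbabilityMeasure μ]
        (G : Fin N → Ω → Option (Fin 3)),
        (∀ i, Measurable (G i)) →
        iIndepFun G μ →
        (∀ i, μ {ω | G i ω ≠ none} = ENNReal.ofReal (p ^ 4)) →
        (∀ i, ENNReal.ofReal ((2 / 3) * p ^ 4) ≤ μ {ω | G i ω = some 0}) →
        μ {ω | ∃ q : Fin 3, q ≠ 0 ∧
            (Finset.univ.filter fun i => G i ω = some 0).card ≤
              (Finset.univ.filter fun i => G i ω = some q).card}
          ≤ ENNReal.ofReal (c / (n : ℝ) ^ 4) := by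
  refine ⟨72 / p ^ 8, 2, by positivity, by norm_num, ?_⟩
  intro n N hn hN Ω _ μ _ G hG hind hA hB
  have hn0 : (0 : ℝ) < n := by positivity
  have hmargin (q : Fin 3) (hq : q ≠ 0) (i : Fin N) :
      μ.real {ω | G i ω = some q} - μ.real {ω | G i ω = some 0} ≤ -(p ^ 4 / 3) := by
    have hS : μ.real {ω | G i ω ≠ none} = p ^ 4 := by
      rw [measureReal_def, hA i, ENNReal.toReal_ofReal (by positivity)]
    rw [← hS]
    refine measureReal_sub_le_of_two_thirds_le ((hG i) measurableSet_eq) ?_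
      (fun ω h ↦ by simp [Set.mem_ofPred_eq.mp h]) (fun ω h ↦ by simp [Set.mem_ofPred_eq.mp h]) ?_
    · exact Set.disjoint_left.2 fun ω h0 hq' ↦ hq (Option.some_injective _ (hq'.symm.trans h0))
    · rw [hS]
      exact (ENNReal.ofReal_le_iff_le_toReal (measure_ne_top _ _)).1 (hB i)
  have hfail (q : Fin 3) (hq : q ≠ 0) :
      μ {ω | #{i | G i ω = some 0} ≤ #{i | G i ω = some q}} ≤ ENNReal.ofReal (1 / n ^ 4) := by
    rw [← ofReal_measureReal, one_div]
    refine ENNReal.ofReal_le_ofReal ((measureReal_card_le_card_le_exp hG hind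
      (by positivity) (hmargin q hq)).trans (Real.exp_neg_le_inv_pow_of_mul_log_le hn0 4 ?_))
    have := mul_le_mul_of_nonneg_right hN (by positivity : (0 : ℝ) ≤ p ^ 8 / 18)
    field_simp at this
    simp only [Fintype.card_fin]
    linarith
  calc μ {ω | ∃ q : Fin 3, q ≠ 0 ∧ #{i | G i ω = some 0} ≤ #{i | G i ω = some q}}
      ≤ μ ({ω | #{i | G i ω = some 0} ≤ #{i | G i ω = some 1}} ∪
          {ω | #{i | G i ω = some 0} ≤ #{i | G i ω = some 2}}) := by
        refine measure_mono fun ω ⟨q, hq, hle⟩ ↦ ?_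
        fin_cases q
        exacts [absurd rfl hq, Or.inl hle, Or.inr hle]
    _ ≤ ENNReal.ofReal (1 / n ^ 4) + ENNReal.ofReal (1 / n ^ 4) :=
        (measure_union_le _ _).trans (add_le_add (hfail 1 (by decide)) (hfail 2 (by decide)))
    _ = ENNReal.ofReal (2 / n ^ 4) := by
        rw [← ENNReal.ofReal_add (by positivity) (by positivity)]
        ring_nf

/-- Plurality quartet correctness: fix a four-tuple `X`.  Each of `N` independent
genes contains `X` with probability `p⁴` (value `none` means `X` is not contained;
`some q` means the gene displays quartet topology `q`, with `some 0` the true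
species quartet `q_s`), and conditionally on containing `X` displays `q_s` with
probability at least `2/3`.  Then for `C₂` large enough (depending only on `p`)
and `N ≥ C₂ log n`, the probability that the empirical plurality quartet differs
from `q_s` is at most `c/n⁴`. -/
theorem plurality_quartet_error (p : ℝ) (hp0 : 0 < p) (hp1 : p ≤ 1) :
    ∃ C₂ c : ℝ, 0 < C₂ ∧ 0 < c ∧
      ∀ (n N : ℕ), 2 ≤ n → C₂ * Real.log n ≤ (N : ℝ) →
      ∀ (Ω : Type) [MeasurableSpace Ω] (μ : Measure Ω) [IsProbabilityMeasure μ]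
        (G : Fin N → Ω → Option (Fin 3)),
        (∀ i, Measurable (G i)) →
        iIndepFun G μ →
        (∀ i, μ {ω | G i ω ≠ none} = ENNReal.ofReal (p ^ 4)) →
        (∀ i, ENNReal.ofReal ((2 / 3) * p ^ 4) ≤ μ {ω | G i ω = some 0}) →
        μ {ω | ∃ q : Fin 3, q ≠ 0 ∧
            (Finset.univ.filter fun i => G i ω = some 0).card ≤
              (Finset.univ.filter fun i => G i ω = some q).card}
          ≤ ENNReal.ofReal (c / (n : ℝ) ^ 4) :=
  plurality_quartet_error_general p hp0
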